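/- For every integer m ≥ 1, the series Σ_{k=1}^∞ H_k²/((k+m)(k+m+1)) converges to (1/m)(π²/6 + H_m² + H̄_m − H_m/m). -/

import Mathlib

open Finset

/-- `n`-th harmonic number. -/
noncomputable def H (n : ℕ) : ℝ := ∑ k ∈ Finset.Icc 1 n, (1 : ℝ) / k

/-- Second-order harmonic number. -/
noncomputable def Hbar (n : ℕ) : ℝ := ∑ k ∈ Finset.Icc 1 n, (1 : ℝ) / (k : ℝ) ^ 2

/-!
Summation by parts against `1/(k+m)`, using `H_k²/(k+m) → 0`, turns the series into
`∑ (H_k² - H_{k-1}²)/(k+m) = ∑ (2 H_k - 1/k)/(k(k+m))`, which by partial fractions is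
`(2/m) ∑ H_k (1/k - 1/(k+m)) - (1/m) ∑ (1/k² - 1/(k(k+m)))`.
The second sum telescopes to `ζ(2) - H_m/m`. The first is a telescoping sum in `m` whose
increments `∑ H_k (1/(k+i) - 1/(k+i+1))` are, again by parts, `∑ 1/(k(k+i))`: this is `ζ(2)`
for `i = 0` and `H_i/i` for `i ≥ 1`, and `∑_{0<i<m} H_i/i = (H_{m-1}² + H̄_{m-1})/2`.
-/

open Filter Topology Real

lemma sum_range_mul_sub_succ {R : Type*} [CommRing R] (f b : ℕ → R) (N : ℕ) :
    ∑ k ∈ range N, f (k + 1) * (b k - b (k + 1))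
      = ∑ k ∈ range N, (f (k + 1) - f k) * b k + f 0 * b 0 - f N * b N := by
  induction N with
  | zero => simp
  | succ N ih => rw [sum_range_succ, sum_range_succ, ih]; ring

lemma hasSum_by_parts {f b : ℕ → ℝ} {s : ℝ} (hf : ∀ k, 0 ≤ f k) (hb : Antitone b)
    (hf0 : f 0 = 0) (hlim : Tendsto (fun n => f n * b n) atTop (𝓝 0))
    (h : HasSum (fun k => (f (k + 1) - f k) * b k) s) :
    HasSum (fun k => f (k + 1) * (b k - b (k + 1))) s := by
  rw [hasSum_iff_tendsto_nat_of_nonneg fun k => mul_nonneg (hf _) (sub_nonneg.2 (hb k.le_succ))]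
  simp_rw [sum_range_mul_sub_succ, hf0, zero_mul, add_zero]
  simpa using h.tendsto_sum_nat.sub hlim

lemma hasSum_sub_succ_of_antitone {b : ℕ → ℝ} {l : ℝ} (hb : Antitone b)
    (hl : Tendsto b atTop (𝓝 l)) : HasSum (fun k => b k - b (k + 1)) (b 0 - l) := by
  rw [hasSum_iff_tendsto_nat_of_nonneg fun k => sub_nonneg.2 (hb k.le_succ)]
  simp_rw [sum_range_sub']
  exact tendsto_const_nhds.sub hl

lemma antitone_one_div_add {c : ℝ} (hc : 0 ≤ c) : Antitone fun k : ℕ => 1 / ((k : ℝ) + 1 + c) :=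
  antitone_nat_of_succ_le fun k => by push_cast; gcongr; linarith

lemma tendsto_one_div_add (c : ℝ) : Tendsto (fun k : ℕ => 1 / ((k : ℝ) + 1 + c)) atTop (𝓝 0) := by
  simpa only [one_div, add_assoc, Function.comp_def] using tendsto_inv_atTop_zero.comp
    (tendsto_atTop_add_const_right _ (1 + c) tendsto_natCast_atTop_atTop)

lemma H_zero : H 0 = 0 := by simp [H]

lemma Hbar_zero : Hbar 0 = 0 := by simp [Hbar]

lemma H_succ (n : ℕ) : H (n + 1) = H n + 1 / ((n : ℝ) + 1) := by
  rw [H, sum_Icc_succ_top (by omega)]; push_cast; rfl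

lemma Hbar_succ (n : ℕ) : Hbar (n + 1) = Hbar n + 1 / ((n : ℝ) + 1) ^ 2 := by
  rw [Hbar, sum_Icc_succ_top (by omega)]; push_cast; rfl

lemma H_nonneg (n : ℕ) : 0 ≤ H n := sum_nonneg fun _ _ => by positivity

lemma H_le_one_add_log (n : ℕ) : H n ≤ 1 + log n := by
  simpa [H, harmonic_eq_sum_Icc] using harmonic_le_one_add_log n

lemma tendsto_H_pow_div (p : ℕ) (c : ℝ) :
    Tendsto (fun n : ℕ => H n ^ p / ((n : ℝ) + c)) atTop (𝓝 0) := by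
  have hlog : Tendsto (fun n : ℕ => log (exp 1 * n) ^ p / ((exp 1)⁻¹ * (exp 1 * n) + c))
      atTop (𝓝 0) :=
    (tendsto_pow_log_div_mul_add_atTop _ c p (by positivity)).comp
      (tendsto_natCast_atTop_atTop.const_mul_atTop (exp_pos 1))
  refine squeeze_zero' ?_ ?_ hlog
  · filter_upwards [tendsto_natCast_atTop_atTop.eventually_gt_atTop (-c)] with n hn
    exact div_nonneg (pow_nonneg (H_nonneg n) p) (by linarith)
  · filter_upwards [tendsto_natCast_atTop_atTop.eventually_gt_atTop (max (-c) 0)] with n hn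
    have hn0 : (n : ℝ) ≠ 0 := by linarith [le_max_right (-c) 0]
    rw [log_mul (exp_ne_zero 1) hn0, log_exp, inv_mul_cancel_left₀ (exp_ne_zero 1)]
    gcongr
    · linarith [le_max_left (-c) 0]
    · exact H_nonneg n
    · linarith [H_le_one_add_log n]

lemma hasSum_one_div_succ_sq : HasSum (fun k : ℕ => 1 / ((k : ℝ) + 1) ^ 2) (π ^ 2 / 6) := by
  simpa using (hasSum_nat_add_iff' 1).2 hasSum_zeta_two

lemma hasSum_one_div_succ_sub_one_div_add (m : ℕ) :
    HasSum (fun k : ℕ => 1 / ((k : ℝ) + 1) - 1 / ((k : ℝ) + 1 + m)) (H m) := by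
  induction m with
  | zero => simp [H_zero]
  | succ m ih =>
    have htel := hasSum_sub_succ_of_antitone (antitone_one_div_add m.cast_nonneg)
      (tendsto_one_div_add m)
    convert ih.add htel using 1
    · funext k; push_cast; ring
    · rw [H_succ]; simp [add_comm]

lemma hasSum_one_div_mul_add {m : ℕ} (hm : m ≠ 0) :
    HasSum (fun k : ℕ => 1 / (((k : ℝ) + 1) * ((k : ℝ) + 1 + m))) (H m / m) := by
  have hm' : (m : ℝ) ≠ 0 := Nat.cast_ne_zero.2 hm
  refine ((hasSum_one_div_succ_sub_one_div_add m).div_const (m : ℝ)).congr_fun fun k => ?_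
  field_simp
  ring

lemma hasSum_H_mul_sub_of_hasSum {c s : ℝ} (hc : 0 ≤ c)
    (h : HasSum (fun k : ℕ => 1 / (((k : ℝ) + 1) * ((k : ℝ) + 1 + c))) s) :
    HasSum (fun k : ℕ => H (k + 1) * (1 / ((k : ℝ) + 1 + c) - 1 / ((k : ℝ) + 2 + c))) s := by
  have hlim : Tendsto (fun n : ℕ => H n * (1 / ((n : ℝ) + 1 + c))) atTop (𝓝 0) :=
    (tendsto_H_pow_div 1 (1 + c)).congr fun n => by ring
  have hdiff : HasSum (fun k : ℕ => (H (k + 1) - H k) * (1 / ((k : ℝ) + 1 + c))) s := by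
    convert h using 2 with k
    rw [H_succ, add_sub_cancel_left, one_div_mul_one_div]
  convert hasSum_by_parts H_nonneg (antitone_one_div_add hc) H_zero hlim hdiff using 4 with k
  push_cast
  ring

lemma hasSum_H_mul_one_div_sub (n : ℕ) :
    HasSum (fun k : ℕ => H (k + 1) * (1 / ((k : ℝ) + 1) - 1 / ((k : ℝ) + 2 + n)))
      (π ^ 2 / 6 + (H n ^ 2 + Hbar n) / 2) := by
  induction n with
  | zero =>
    simpa [H_zero, Hbar_zero] using
      hasSum_H_mul_sub_of_hasSum le_rfl (by simpa [sq] using hasSum_one_div_succ_sq)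
  | succ n ih =>
    have step := hasSum_H_mul_sub_of_hasSum (Nat.cast_nonneg (n + 1))
      (hasSum_one_div_mul_add n.add_one_ne_zero)
    convert ih.add step using 1
    · funext k; push_cast; ring
    · rw [H_succ, Hbar_succ]; push_cast; field_simp; ring

theorem sum_H_sq_partial_fraction (m : ℕ) (hm : 1 ≤ m) :
    HasSum (fun k : ℕ => (H (k + 1)) ^ 2 / (((k : ℝ) + 1 + m) * ((k : ℝ) + 1 + m + 1)))
      ((1 / m) * (Real.pi ^ 2 / 6 + (H m) ^ 2 + Hbar m - H m / m)) := by
  obtain ⟨n, rfl⟩ := Nat.exists_eq_add_of_le' hm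
  have hdiff := (((hasSum_H_mul_one_div_sub n).mul_left 2).sub (hasSum_one_div_succ_sq.sub
    (hasSum_one_div_mul_add n.add_one_ne_zero))).div_const ((n : ℝ) + 1) |>.congr_fun
    (g := fun k : ℕ => (H (k + 1) ^ 2 - H k ^ 2) * (1 / ((k : ℝ) + 1 + (n + 1 : ℕ))))
    fun k => by rw [H_succ]; push_cast; field_simp; ring
  have hlim : Tendsto (fun k : ℕ => H k ^ 2 * (1 / ((k : ℝ) + 1 + (n + 1 : ℕ)))) atTop (𝓝 0) :=
    (tendsto_H_pow_div 2 (1 + (n + 1 : ℕ))).congr fun k => by ring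
  convert hasSum_by_parts (fun k => sq_nonneg (H k)) (antitone_one_div_add (Nat.cast_nonneg _))
    (by simp [H_zero]) hlim hdiff using 1
  · funext k; push_cast; field_simp; ring
  · rw [H_succ, Hbar_succ]; push_cast; field_simp; ring
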